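/- arXiv:math/0612083 — 5 statements merged into one kernel-verified Lean document; each statement's English description precedes it below -/
import Mathlib

section
/- Let r be a binary relation on a type α that is finitely branching, i.e. for every a : α the set {b | r a b} is finite. Then r terminates — there is no map u : ℕ → α with r (u n) (u (n+1)) for all n — if and only if there exists a map f : α → ℕ such that f a > f b whenever r a b. -/
/-- A finitely branching relation terminates (no infinite reduction
sequence) if and only if it admits a strictly decreasing natural-number measure. -/
theorem finitely_branching_terminates_iff_measure {α : Type*} (r : α → α → Prop)
    (hfb : ∀ a : α, {b | r a b}.Finite) :
    (¬ ∃ u : ℕ → α, ∀ n : ℕ, r (u n) (u (n + 1))) ↔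
      ∃ f : α → ℕ, ∀ a b : α, r a b → f a > f b := by
  constructor
  · intro hterm
    have wf : WellFounded (fun b a => r a b) := by
      by_contra hwf
      have ⟨a0, ha0⟩ : ∃ a, ¬ Acc (fun b a => r a b) a := by
        by_contra h
        push_neg at h
        exact hwf ⟨h⟩
      have step : ∀ x : {a // ¬ Acc (fun b a => r a b) a},
          ∃ y : {a // ¬ Acc (fun b a => r a b) a}, r x.1 y.1 := by
        rintro ⟨x, hx⟩
        by_contra h
        push_neg at h
        exact hx (Acc.intro x fun y hy => by_contra fun hny => h ⟨y, hny⟩ hy)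
      choose g hg using step
      refine hterm ⟨fun n => (g^[n] ⟨a0, ha0⟩).1, fun n => ?_⟩
      simp only [Function.iterate_succ_apply']
      exact hg _
    set f : α → ℕ := wf.fix (fun a ih =>
      (hfb a).toFinset.attach.sup fun b => ih b ((hfb a).mem_toFinset.1 b.2) + 1) with hf
    refine ⟨f, fun a b hab => ?_⟩
    have : f a = (hfb a).toFinset.attach.sup fun b => f b + 1 := by
      rw [hf, wf.fix_eq]
    rw [this]
    have hb : b ∈ (hfb a).toFinset := (hfb a).mem_toFinset.2 hab
    exact lt_of_lt_of_le (Nat.lt_succ_self (f b))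
      (Finset.le_sup (f := fun c => f c.1 + 1) (Finset.mem_attach _ ⟨b, hb⟩))
  · rintro ⟨f, hf⟩ ⟨u, hu⟩
    have hmono : ∀ n, f (u n) + n ≤ f (u 0) := by
      intro n
      induction n with
      | zero => simp
      | succ k ih =>
        have := hf _ _ (hu k)
        omega
    have := hmono (f (u 0) + 1)
    omega
end

section
/- Let R be a finite set of rewrite rules over L such that for every rule (l, r) ∈ R every variable occurring in r also occurs in l. Then: (1) →R terminates if and only if there exists a map F : L.Term ℕ → ℕ such that F u > F v whenever u →R v; and (2) if →R terminates, F can moreover be chosen so that F u ≥ F u' whenever u' is a subterm of u, where the subterm relation is the reflexive–transitive closure of the immediate-subterm relation relating each uᵢ to f(u₁,…,uₙ) for every n-ary function symbol f. -/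
open FirstOrder FirstOrder.Language

/-- One-step rewriting relation generated by a set `R` of rewrite rules on first-order
terms: rules applied under any substitution, closed under congruence. -/
inductive RewriteStep (L : Language) (R : Set (L.Term ℕ × L.Term ℕ)) :
    L.Term ℕ → L.Term ℕ → Prop
  | rule (l r : L.Term ℕ) (hlr : (l, r) ∈ R) (σ : ℕ → L.Term ℕ) :
      RewriteStep L R (l.subst σ) (r.subst σ)
  | congr {n : ℕ} (f : L.Functions n) (ts : Fin n → L.Term ℕ) (i : Fin n)
      (t' : L.Term ℕ) (h : RewriteStep L R (ts i) t') :
      RewriteStep L R (Term.func f ts) (Term.func f (Function.update ts i t'))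

/-- The immediate-subterm relation: `u` is an immediate subterm of `v`. -/
def ImmediateSubterm (L : Language) (u v : L.Term ℕ) : Prop :=
  ∃ (n : ℕ) (f : L.Functions n) (ts : Fin n → L.Term ℕ) (i : Fin n),
    v = Term.func f ts ∧ u = ts i

/-- The subterm relation: reflexive-transitive closure of the immediate-subterm
relation. `Subterm L u v` means `u` is a subterm of `v`. -/
def Subterm (L : Language) : L.Term ℕ → L.Term ℕ → Prop :=
  Relation.ReflTransGen (ImmediateSubterm L)

section Aux
variable {L : Language}

lemma subst_congr {t : L.Term ℕ} {σ σ' : ℕ → L.Term ℕ}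
    (h : ∀ k ∈ t.varFinset, σ k = σ' k) : t.subst σ = t.subst σ' := by
  induction t with
  | var k => simpa using h k (by simp)
  | func f ts ih =>
      simp only [Term.subst]
      congr 1
      funext i
      exact ih i fun k hk => h k (by simp; exact ⟨i, hk⟩)

lemma eqOn_of_subst_eq {t : L.Term ℕ} {σ σ' : ℕ → L.Term ℕ}
    (h : t.subst σ = t.subst σ') : ∀ k ∈ t.varFinset, σ k = σ' k := by
  induction t with
  | var k => simpa using h
  | func f ts ih =>
      simp only [Term.subst, Term.func.injEq, heq_eq_eq, true_and] at h
      intro k hk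
      simp only [Term.varFinset, Finset.mem_biUnion, Finset.mem_univ, true_and] at hk
      obtain ⟨i, hi⟩ := hk
      exact ih i (congrFun h i) k hi

variable {R : Set (L.Term ℕ × L.Term ℕ)}

lemma root_subsingleton
    (hvar : ∀ p ∈ R, ∀ k : ℕ, k ∈ (p.2 : L.Term ℕ).varFinset → k ∈ (p.1 : L.Term ℕ).varFinset)
    (p : L.Term ℕ × L.Term ℕ) (hp : p ∈ R) (u : L.Term ℕ) :
    {v | ∃ σ : ℕ → L.Term ℕ, p.1.subst σ = u ∧ v = p.2.subst σ}.Subsingleton := by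
  rintro v ⟨σ, hσ, rfl⟩ v' ⟨σ', hσ', rfl⟩
  exact subst_congr fun k hk => eqOn_of_subst_eq (hσ.trans hσ'.symm) k (hvar p hp k hk)

lemma step_inv {u v : L.Term ℕ} (h : RewriteStep L R u v) :
    (∃ p ∈ R, ∃ σ : ℕ → L.Term ℕ, p.1.subst σ = u ∧ v = p.2.subst σ) ∨
    (∃ (n : ℕ) (f : L.Functions n) (ts : Fin n → L.Term ℕ) (i : Fin n) (t' : L.Term ℕ),
      u = Term.func f ts ∧ v = Term.func f (Function.update ts i t') ∧
      RewriteStep L R (ts i) t') := by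
  cases h with
  | rule l r hlr σ => exact Or.inl ⟨(l, r), hlr, σ, rfl, rfl⟩
  | congr f ts i t' h => exact Or.inr ⟨_, f, ts, i, t', rfl, rfl, h⟩

lemma finite_reducts (hfin : R.Finite)
    (hvar : ∀ p ∈ R, ∀ k : ℕ, k ∈ (p.2 : L.Term ℕ).varFinset → k ∈ (p.1 : L.Term ℕ).varFinset)
    (u : L.Term ℕ) : {v | RewriteStep L R u v}.Finite := by
  have hroot : ∀ u : L.Term ℕ,
      (⋃ p ∈ R, {v | ∃ σ : ℕ → L.Term ℕ, p.1.subst σ = u ∧ v = p.2.subst σ}).Finite :=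
    fun u => Set.Finite.biUnion hfin fun p hp => (root_subsingleton hvar p hp u).finite
  induction u with
  | var k =>
      apply (hroot (Term.var k)).subset
      rintro v hv
      rcases step_inv hv with ⟨p, hp, σ, h1, h2⟩ | ⟨n, f, ts, i, t', h1, h2, h3⟩
      · exact Set.mem_biUnion hp ⟨σ, h1, h2⟩
      · exact absurd h1 (by simp)
  | func f ts ih =>
      apply Set.Finite.subset
        (Set.Finite.union (hroot (Term.func f ts))
          (Set.finite_iUnion fun i : Fin _ =>
            (ih i).image fun w => Term.func f (Function.update ts i w)))
      rintro v hv
      rcases step_inv hv with ⟨p, hp, σ, h1, h2⟩ | ⟨n, f', ts', i, t', h1, h2, h3⟩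
      · exact Or.inl (Set.mem_biUnion hp ⟨σ, h1, h2⟩)
      · obtain ⟨rfl, hf, hts⟩ : n = _ ∧ HEq f' f ∧ HEq ts' ts := by
          simpa [Term.func.injEq] using h1.symm
        obtain rfl := eq_of_heq hts
        obtain rfl := eq_of_heq hf
        exact Or.inr (Set.mem_iUnion.2 ⟨i, ⟨t', h3, h2.symm⟩⟩)

end Aux

section Height
variable {L : Language} {R : Set (L.Term ℕ × L.Term ℕ)}

noncomputable def heightF (hwf : WellFounded fun v u : L.Term ℕ => RewriteStep L R u v)
    (hfin : ∀ u, {v | RewriteStep L R u v}.Finite) : L.Term ℕ → ℕ :=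
  hwf.fix fun u F =>
    (hfin u).toFinset.attach.sup fun v => F v.1 ((hfin u).mem_toFinset.1 v.2) + 1

lemma heightF_eq (hwf : WellFounded fun v u : L.Term ℕ => RewriteStep L R u v)
    (hfin : ∀ u, {v | RewriteStep L R u v}.Finite) (u : L.Term ℕ) :
    heightF hwf hfin u =
      (hfin u).toFinset.attach.sup (fun v => heightF hwf hfin v.1 + 1) := by
  rw [heightF, WellFounded.fix_eq]

lemma heightF_lt (hwf : WellFounded fun v u : L.Term ℕ => RewriteStep L R u v)
    (hfin : ∀ u, {v | RewriteStep L R u v}.Finite) {u v : L.Term ℕ}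
    (h : RewriteStep L R u v) : heightF hwf hfin v < heightF hwf hfin u := by
  rw [heightF_eq hwf hfin u]
  have := Finset.le_sup (f := fun v : (hfin u).toFinset => heightF hwf hfin v.1 + 1)
    (Finset.mem_attach _ ⟨v, (hfin u).mem_toFinset.2 h⟩)
  dsimp only at this
  omega

lemma heightF_le (hwf : WellFounded fun v u : L.Term ℕ => RewriteStep L R u v)
    (hfin : ∀ u, {v | RewriteStep L R u v}.Finite) {u : L.Term ℕ} {c : ℕ}
    (h : ∀ v, RewriteStep L R u v → heightF hwf hfin v < c) :
    heightF hwf hfin u ≤ c := by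
  rw [heightF_eq hwf hfin u]
  apply Finset.sup_le
  rintro ⟨v, hv⟩ -
  have := h v ((hfin u).mem_toFinset.1 hv)
  dsimp only
  omega

lemma heightF_sub (hwf : WellFounded fun v u : L.Term ℕ => RewriteStep L R u v)
    (hfin : ∀ u, {v | RewriteStep L R u v}.Finite) (t : L.Term ℕ) :
    ∀ {n : ℕ} (f : L.Functions n) (ts : Fin n → L.Term ℕ) (i : Fin n), ts i = t →
      heightF hwf hfin t ≤ heightF hwf hfin (Term.func f ts) := by
  induction t using WellFounded.induction hwf with
  | _ t IH =>
    intro n f ts i hi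
    apply heightF_le
    intro v hv
    have h1 : RewriteStep L R (Term.func f ts) (Term.func f (Function.update ts i v)) :=
      RewriteStep.congr f ts i v (hi ▸ hv)
    have h2 := heightF_lt hwf hfin h1
    have h3 := IH v hv f (Function.update ts i v) i (Function.update_self i v ts)
    omega

lemma wf_of_no_chain
    (h : ¬∃ u : ℕ → L.Term ℕ, ∀ n : ℕ, RewriteStep L R (u n) (u (n + 1))) :
    WellFounded fun v u : L.Term ℕ => RewriteStep L R u v := by
  by_contra hwf
  apply h
  have key : ∀ u : {t : L.Term ℕ // ¬ Acc (fun v u : L.Term ℕ => RewriteStep L R u v) t},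
      ∃ v : {t : L.Term ℕ // ¬ Acc (fun v u : L.Term ℕ => RewriteStep L R u v) t},
        RewriteStep L R u.1 v.1 := by
    rintro ⟨u, hu⟩
    by_contra hc
    push_neg at hc
    exact hu (Acc.intro u fun v hv =>
      Classical.byContradiction fun hnv => hc ⟨v, hnv⟩ hv)
  obtain ⟨u0, hu0⟩ : ∃ u, ¬Acc (fun v u : L.Term ℕ => RewriteStep L R u v) u := by
    by_contra hc
    push_neg at hc
    exact hwf ⟨hc⟩
  choose g hg using key
  refine ⟨fun n => (g^[n] ⟨u0, hu0⟩).1, fun n => ?_⟩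
  show RewriteStep L R (g^[n] ⟨u0, hu0⟩).1 (g^[n + 1] ⟨u0, hu0⟩).1
  rw [Function.iterate_succ_apply']
  exact hg _

end Height

/-- For a finite set of rewrite rules whose right-hand sides only use
variables of the corresponding left-hand sides: (1) the rewriting relation terminates
iff there is a strictly decreasing natural-number measure; (2) in the terminating
case the measure can moreover be chosen monotone with respect to subterms. -/
theorem rewrite_terminates_iff_measure (L : Language)
    (R : Set (L.Term ℕ × L.Term ℕ)) (hfin : R.Finite)
    (hvar : ∀ p ∈ R, ∀ k : ℕ, k ∈ (p.2 : L.Term ℕ).varFinset → k ∈ (p.1 : L.Term ℕ).varFinset) :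
    ((¬ ∃ u : ℕ → L.Term ℕ, ∀ n : ℕ, RewriteStep L R (u n) (u (n + 1))) ↔
      ∃ F : L.Term ℕ → ℕ, ∀ u v : L.Term ℕ, RewriteStep L R u v → F u > F v) ∧
    ((¬ ∃ u : ℕ → L.Term ℕ, ∀ n : ℕ, RewriteStep L R (u n) (u (n + 1))) →
      ∃ F : L.Term ℕ → ℕ,
        (∀ u v : L.Term ℕ, RewriteStep L R u v → F u > F v) ∧
        (∀ u u' : L.Term ℕ, Subterm L u' u → F u ≥ F u')) := by
  have main : (¬ ∃ u : ℕ → L.Term ℕ, ∀ n : ℕ, RewriteStep L R (u n) (u (n + 1))) →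
      ∃ F : L.Term ℕ → ℕ,
        (∀ u v : L.Term ℕ, RewriteStep L R u v → F u > F v) ∧
        (∀ u u' : L.Term ℕ, Subterm L u' u → F u ≥ F u') := by
    intro h
    have hwf := wf_of_no_chain h
    have hfr := finite_reducts hfin hvar
    refine ⟨heightF hwf hfr, fun u v hs => heightF_lt hwf hfr hs, ?_⟩
    intro u u' hsub
    induction hsub with
    | refl => exact le_refl _
    | tail hab hbc ih =>
        obtain ⟨n, f, ts, i, rfl, rfl⟩ := hbc
        exact le_trans ih (heightF_sub hwf hfr (ts i) f ts i rfl)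
  constructor
  · constructor
    · intro h
      obtain ⟨F, hF, -⟩ := main h
      exact ⟨F, hF⟩
    · rintro ⟨F, hF⟩ ⟨u, hu⟩
      have key : ∀ n, F (u n) + n ≤ F (u 0) := by
        intro n
        induction n with
        | zero => omega
        | succ n ih => have := hF (u n) (u (n + 1)) (hu n); omega
      have := key (F (u 0) + 1)
      omega
  · exact main
end

section
/- Let f and g be interpretation triples from m to n with f ≻ g, let h be an interpretation triple from n to p and let k be an interpretation triple from q to m. Then h ∘ f ≻ h ∘ g and f ∘ k ≻ g ∘ k; that is, the relation ≻ is compatible with composition of interpretation triples on both sides. -/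
/-- An interpretation triple from `m` to `n`: a monotone covariant current map,
a monotone contravariant current map, and a monotone heat map. -/
structure ITriple (X Y M : Type*) [Preorder X] [Preorder Y] [Preorder M]
    (m n : ℕ) where
  cov : (Fin m → X) → (Fin n → X)
  contra : (Fin n → Y) → (Fin m → Y)
  heat : (Fin m → X) × (Fin n → Y) → M
  cov_mono : Monotone cov
  contra_mono : Monotone contra
  heat_mono : Monotone heat

variable {X Y M : Type*} [Preorder X] [Preorder Y] [AddCommMonoid M] [PartialOrder M] [IsOrderedAddMonoid M]

/-- Composition of interpretation triples: `g.comp f` is `g` after `f`. -/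
def ITriple.comp {m n p : ℕ} (g : ITriple X Y M n p) (f : ITriple X Y M m n) :
    ITriple X Y M m p where
  cov := g.cov ∘ f.cov
  contra := f.contra ∘ g.contra
  heat := fun xy => f.heat (xy.1, g.contra xy.2) + g.heat (f.cov xy.1, xy.2)
  cov_mono := g.cov_mono.comp f.cov_mono
  contra_mono := f.contra_mono.comp g.contra_mono
  heat_mono := by
    intro a b hab
    exact add_le_add
      (f.heat_mono (Prod.mk_le_mk.mpr ⟨hab.1, g.contra_mono hab.2⟩))
      (g.heat_mono (Prod.mk_le_mk.mpr ⟨f.cov_mono hab.1, hab.2⟩))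

/-- The strict order `f ≻ g` on interpretation triples: covariant and contravariant
parts dominate pointwise and the heat strictly dominates. -/
def ITriple.Succ {m n : ℕ} (f g : ITriple X Y M m n) : Prop :=
  ∀ (x : Fin m → X) (y : Fin n → Y),
    g.cov x ≤ f.cov x ∧ g.contra y ≤ f.contra y ∧ g.heat (x, y) < f.heat (x, y)

namespace ITriple

variable [AddLeftStrictMono M] {m n : ℕ} {f g : ITriple X Y M m n}

theorem Succ.comp_left {p : ℕ} (hfg : f.Succ g) (h : ITriple X Y M n p) :
    (h.comp f).Succ (h.comp g) := by
  intro x y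
  obtain ⟨hcov, hcontra, hheat⟩ := hfg x (h.contra y)
  exact ⟨h.cov_mono hcov, hcontra,
    add_lt_add_of_lt_of_le hheat (h.heat_mono (Prod.mk_le_mk.mpr ⟨hcov, le_rfl⟩))⟩

theorem Succ.comp_right {q : ℕ} (hfg : f.Succ g) (k : ITriple X Y M q m) :
    (f.comp k).Succ (g.comp k) := by
  intro x y
  obtain ⟨hcov, hcontra, hheat⟩ := hfg (k.cov x) y
  exact ⟨hcov, k.contra_mono hcontra,
    add_lt_add_of_le_of_lt (k.heat_mono (Prod.mk_le_mk.mpr ⟨le_rfl, hcontra⟩)) hheat⟩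

end ITriple

/-- The strict order `≻` on interpretation triples is compatible
with composition on both sides. -/
theorem iTriple_succ_comp_compat
    (hadd : ∀ a b c : M, a < b → c + a < c + b)
    {m n p q : ℕ} (f g : ITriple X Y M m n) (h : ITriple X Y M n p)
    (k : ITriple X Y M q m) (hfg : f.Succ g) :
    (h.comp f).Succ (h.comp g) ∧ (f.comp k).Succ (g.comp k) := by
  have : AddLeftStrictMono M := ⟨fun c _ _ hab => hadd _ _ c hab⟩
  exact ⟨hfg.comp_left h, hfg.comp_right k⟩
end

section
/- Let n ≥ 1 and let i₁, …, iₙ, j, k be positive natural numbers. Then {j} + (n + 1 + Σ_{1≤u<v≤n} iᵤ·iᵥ) • {k} + Σ_{u=1}^{n} {iᵤ} + k • (Σ_{1≤u<v≤n} {iᵤ + iᵥ}) <DM {j + k + 1} + {i₁ + ⋯ + iₙ + 1} + {k}. -/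
/-- The Dershowitz–Manna order on multisets: `s <DM t` iff `t = z + x`, `s = z + y`
with `x` nonempty and every element of `y` strictly smaller than some element of `x`. -/
def IsDershowitzMannaLT {α : Type*} [LT α] (s t : Multiset α) : Prop :=
  ∃ z x y : Multiset α, x ≠ 0 ∧ t = z + x ∧ s = z + y ∧ ∀ b ∈ y, ∃ a ∈ x, b < a

/-!
Every element of the left-hand multiset is strictly smaller than `j + k + 1` (namely `j` and `k`)
or than `(∑ u, i u) + 1` (namely each `i u` and each `i u + i v` with `u ≠ v`), so the
Dershowitz–Manna step can replace the whole right-hand multiset, with empty common part.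
-/

theorem isDershowitzMannaLT_of_forall_exists_lt {α : Type*} [LT α] {s t : Multiset α}
    (ht : t ≠ 0) (h : ∀ b ∈ s, ∃ a ∈ t, b < a) : IsDershowitzMannaLT s t :=
  ⟨0, t, s, ht, (zero_add t).symm, (zero_add s).symm, h⟩

open Finset in
theorem duplication_rule_isDershowitzMannaLT_general (n : ℕ)
    (i : Fin n → ℕ) (j k : ℕ) :
    IsDershowitzMannaLT
      (({j} : Multiset ℕ)
        + (n + 1 + ∑ p ∈ univ.filter (fun p : Fin n × Fin n => p.1 < p.2),
            i p.1 * i p.2) • ({k} : Multiset ℕ)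
        + ∑ u : Fin n, ({i u} : Multiset ℕ)
        + k • ∑ p ∈ univ.filter (fun p : Fin n × Fin n => p.1 < p.2),
            ({i p.1 + i p.2} : Multiset ℕ))
      (({j + k + 1} : Multiset ℕ) + {(∑ u, i u) + 1} + {k}) := by
  refine isDershowitzMannaLT_of_forall_exists_lt (by simp) fun b hb => ?_
  simp only [Multiset.mem_add, Multiset.mem_nsmul, Multiset.mem_sum, Multiset.mem_singleton,
    mem_filter, mem_univ, true_and] at hb
  rcases hb with ((hb | ⟨-, hb⟩) | ⟨u, rfl⟩) | ⟨-, p, hp, rfl⟩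
  · exact ⟨j + k + 1, by simp, by omega⟩
  · exact ⟨j + k + 1, by simp, by omega⟩
  · exact ⟨(∑ u, i u) + 1, by simp, Nat.lt_succ_of_le (single_le_sum (by simp) (mem_univ u))⟩
  · exact ⟨(∑ u, i u) + 1, by simp,
      Nat.lt_succ_of_le (add_le_sum (by simp) (mem_univ _) (mem_univ _) hp.ne)⟩

open Finset in
/-- For `n ≥ 1` and positive naturals `i₁, …, iₙ, j, k`, the multiset
inequality coming from the local duplication rule holds:
`{j} + (n + 1 + Σ_{u<v} iᵤ·iᵥ) • {k} + Σᵤ {iᵤ} + k • Σ_{u<v} {iᵤ + iᵥ}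
  <DM {j + k + 1} + {i₁ + ⋯ + iₙ + 1} + {k}`. -/
theorem duplication_rule_isDershowitzMannaLT (n : ℕ) (hn : 1 ≤ n)
    (i : Fin n → ℕ) (j k : ℕ) (hi : ∀ u, 0 < i u) (hj : 0 < j) (hk : 0 < k) :
    IsDershowitzMannaLT
      (({j} : Multiset ℕ)
        + (n + 1 + ∑ p ∈ univ.filter (fun p : Fin n × Fin n => p.1 < p.2),
            i p.1 * i p.2) • ({k} : Multiset ℕ)
        + ∑ u : Fin n, ({i u} : Multiset ℕ)
        + k • ∑ p ∈ univ.filter (fun p : Fin n × Fin n => p.1 < p.2),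
            ({i p.1 + i p.2} : Multiset ℕ))
      (({j + k + 1} : Multiset ℕ) + {(∑ u, i u) + 1} + {k}) :=
  duplication_rule_isDershowitzMannaLT_general n i j k
end

section
/- Let F : L.Term ℕ → ℕ be any function; define u ≻ v on terms by: F(c[u]) > F(c[v]) for every one-hole context c, and define (u, i) ≽ (v, j) on pairs of a term and a natural number by: u ≻ v, or (u = v and i ≥ j). Then for every n-ary function symbol φ of L, all terms u₁, …, uₙ, v₁, …, vₙ and all natural numbers i₁, …, iₙ, j₁, …, jₙ such that (uₖ, iₖ) ≽ (vₖ, jₖ) for every k, one has (φ(u₁,…,uₙ), 2·(i₁ + ⋯ + iₙ)) ≽ (φ(v₁,…,vₙ), 2·(j₁ + ⋯ + jₙ)). -/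
/-!
If all arguments agree, the pairs are compared through their indices, and doubling a sum
preserves `≥`. Otherwise some argument strictly decreases. Since `c[φ(w₁, …, □, …, wₙ)]` is again
a one-hole context, `≻` is preserved by replacing a single argument of `φ`; as `≻` is transitive,
replacing the arguments of `φ(u₁, …, uₙ)` by those of `φ(v₁, …, vₙ)` one at a time gives
`φ(u₁, …, uₙ) ≻ φ(v₁, …, vₙ)`.
-/

open FirstOrder FirstOrder.Language

/-- Number of occurrences of the hole variable `Sum.inr ()` in a term over `ℕ ⊕ Unit`. -/
def holeCount {L : Language} : L.Term (ℕ ⊕ Unit) → ℕ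
  | Term.var (Sum.inl _) => 0
  | Term.var (Sum.inr _) => 1
  | Term.func _ ts => ∑ i, holeCount (ts i)

/-- Plugging the term `u` into the hole of a context `c`. -/
def plug {L : Language} (c : L.Term (ℕ ⊕ Unit)) (u : L.Term ℕ) : L.Term ℕ :=
  c.subst (Sum.elim Term.var fun _ => u)

/-- The order on terms induced by a measure `F`: `u ≻ v` iff `F (c[u]) > F (c[v])`
for every one-hole context `c`. -/
def CtxGt {L : Language} (F : L.Term ℕ → ℕ) (u v : L.Term ℕ) : Prop :=
  ∀ c : L.Term (ℕ ⊕ Unit), holeCount c = 1 → F (plug c u) > F (plug c v)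

/-- The lexicographic-style order on pairs of a term and a natural number:
`(u, i) ≽ (v, j)` iff `u ≻ v`, or `u = v` and `i ≥ j`. -/
def PairGe {L : Language} (F : L.Term ℕ → ℕ) (p q : L.Term ℕ × ℕ) : Prop :=
  CtxGt F p.1 q.1 ∨ (p.1 = q.1 ∧ p.2 ≥ q.2)

namespace Relation

variable {ι α β : Type*} [Fintype ι] [DecidableEq ι] {r : α → α → Prop} {s : β → β → Prop}
  {f : (ι → α) → β} {u v : ι → α}

theorem reflTransGen_of_forall_reflGen
    (hf : ∀ w k x y, r x y → s (f (Function.update w k x)) (f (Function.update w k y)))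
    (h : ∀ k, ReflGen r (u k) (v k)) : ReflTransGen s (f u) (f v) := by
  suffices key : ∀ t : Finset ι, ReflTransGen s (f (t.piecewise u v)) (f v) by
    simpa using key Finset.univ
  intro t
  induction t using Finset.induction_on with
  | empty => simpa using ReflTransGen.refl
  | insert j t hj ih =>
    have hv : Function.update (t.piecewise u v) j (v j) = t.piecewise u v := by
      rw [← Finset.piecewise_eq_of_notMem t u v hj, Function.update_eq_self]
    rw [Finset.piecewise_insert]
    rcases (reflGen_iff _ _ _).mp (h j) with heq | hr
    · rwa [← heq, hv]
    · have hstep := hf (t.piecewise u v) j _ _ hr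
      rw [hv] at hstep
      exact .head hstep ih

theorem transGen_of_forall_reflGen
    (hf : ∀ w k x y, r x y → s (f (Function.update w k x)) (f (Function.update w k y)))
    (h : ∀ k, ReflGen r (u k) (v k)) {m : ι} (hm : r (u m) (v m)) : TransGen s (f u) (f v) := by
  refine .head' (Function.update_eq_self m u ▸ hf u m _ _ hm)
    (reflTransGen_of_forall_reflGen hf fun k => ?_)
  rcases eq_or_ne k m with rfl | hk
  · simpa using ReflGen.refl
  · simpa [hk] using h k

end Relation

namespace FirstOrder.Language.Term

variable {L : Language} {α β γ : Type*}

theorem subst_subst (t : L.Term α) (f : α → L.Term β) (g : β → L.Term γ) :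
    (t.subst f).subst g = t.subst fun a => (f a).subst g := by
  induction t with
  | var => rfl
  | func φ ts ih => simp [ih]

theorem subst_relabel (t : L.Term α) (f : α → β) (g : β → L.Term γ) :
    (t.relabel f).subst g = t.subst (g ∘ f) := by
  induction t with
  | var => rfl
  | func φ ts ih => simp [ih]

theorem subst_var (t : L.Term α) : t.subst var = t := by
  induction t with
  | var => rfl
  | func φ ts ih => simp [ih]

end FirstOrder.Language.Term

section Contexts

open Function

variable {L : Language}

def compCtx (c d : L.Term (ℕ ⊕ Unit)) : L.Term (ℕ ⊕ Unit) :=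
  c.subst (Sum.elim (Term.var ∘ Sum.inl) fun _ => d)

theorem holeCount_compCtx (c d : L.Term (ℕ ⊕ Unit)) :
    holeCount (compCtx c d) = holeCount c * holeCount d := by
  induction c with
  | var a => cases a <;> simp [compCtx, holeCount]
  | func φ ts ih => simp_all [compCtx, holeCount, Finset.sum_mul]

theorem plug_compCtx (c d : L.Term (ℕ ⊕ Unit)) (t : L.Term ℕ) :
    plug (compCtx c d) t = plug c (plug d t) := by
  simp only [plug, compCtx, Term.subst_subst]
  congr 1
  funext a
  cases a <;> rfl

theorem holeCount_relabel_inl (t : L.Term ℕ) : holeCount (t.relabel Sum.inl) = 0 := by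
  induction t with
  | var => rfl
  | func φ ts ih => simp [holeCount, ih]

def funcCtx {n : ℕ} (φ : L.Functions n) (w : Fin n → L.Term ℕ) (k : Fin n) :
    L.Term (ℕ ⊕ Unit) :=
  Term.func φ (update (fun i => (w i).relabel Sum.inl) k (Term.var (Sum.inr ())))

theorem holeCount_funcCtx {n : ℕ} (φ : L.Functions n) (w : Fin n → L.Term ℕ) (k : Fin n) :
    holeCount (funcCtx φ w k) = 1 := by
  simp [funcCtx, holeCount, apply_update (fun _ => holeCount), Finset.sum_update_of_mem,
    holeCount_relabel_inl]

theorem plug_funcCtx {n : ℕ} (φ : L.Functions n) (w : Fin n → L.Term ℕ) (k : Fin n)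
    (t : L.Term ℕ) : plug (funcCtx φ w k) t = Term.func φ (update w k t) := by
  simp only [funcCtx, plug, Term.subst]
  congr 1
  funext i
  rcases eq_or_ne i k with rfl | hik <;> simp [*, Term.subst_relabel, Term.subst_var]

end Contexts

section CtxGt

variable {L : Language} {F : L.Term ℕ → ℕ}

instance : IsTrans (L.Term ℕ) (CtxGt F) :=
  ⟨fun _ _ _ hxy hyz c hc => (hyz c hc).trans (hxy c hc)⟩

theorem CtxGt.plug {x y : L.Term ℕ} (hxy : CtxGt F x y) {d : L.Term (ℕ ⊕ Unit)}
    (hd : holeCount d = 1) : CtxGt F (plug d x) (plug d y) := by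
  intro c hc
  simpa only [plug_compCtx] using hxy (compCtx c d) (by rw [holeCount_compCtx, hc, hd])

theorem CtxGt.func_update {n : ℕ} (φ : L.Functions n) (w : Fin n → L.Term ℕ) (k : Fin n)
    {x y : L.Term ℕ} (hxy : CtxGt F x y) :
    CtxGt F (Term.func φ (Function.update w k x)) (Term.func φ (Function.update w k y)) := by
  simpa only [plug_funcCtx] using hxy.plug (holeCount_funcCtx φ w k)

end CtxGt

/-- The covariant interpretation of an operator `φ` is monotone:
if `(uₖ, iₖ) ≽ (vₖ, jₖ)` for all `k`, then
`(φ(u₁,…,uₙ), 2·(i₁+⋯+iₙ)) ≽ (φ(v₁,…,vₙ), 2·(j₁+⋯+jₙ))`. -/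
theorem pairGe_func_monotone (L : Language) (F : L.Term ℕ → ℕ) {n : ℕ}
    (φ : L.Functions n) (u v : Fin n → L.Term ℕ) (i j : Fin n → ℕ)
    (h : ∀ k : Fin n, PairGe F (u k, i k) (v k, j k)) :
    PairGe F (Term.func φ u, 2 * ∑ k, i k) (Term.func φ v, 2 * ∑ k, j k) := by
  by_cases hstrict : ∃ m, CtxGt F (u m) (v m)
  · obtain ⟨m, hm⟩ := hstrict
    have hle : ∀ k, Relation.ReflGen (CtxGt F) (u k) (v k) := fun k =>
      (h k).elim .single fun hk => by rw [show u k = v k from hk.1]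
    left
    rw [← Relation.transGen_eq_self (r := CtxGt F)]
    exact Relation.transGen_of_forall_reflGen (fun w k _ _ => CtxGt.func_update φ w k) hle hm
  · have heq : ∀ k, u k = v k ∧ i k ≥ j k := fun k =>
      (h k).resolve_left (not_exists.mp hstrict k)
    right
    exact ⟨congrArg (Term.func φ) (funext fun k => (heq k).1),
      Nat.mul_le_mul_left 2 (Finset.sum_le_sum fun k _ => (heq k).2)⟩
end
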